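/- For every d ≥ 3, if a graph G admits an oriented d-cycle double cover, then φ_{d−2}(G) ≤ 1 + √(d/(d−2)) if d is even, and φ_{d−2}(G) ≤ 1 + √((d²−1)/(d²−2d−1)) if d is odd. -/

import Mathlib

open scoped BigOperators

/-- `Hd d` : vectors in `ℝ^d` with exactly one coordinate `1`, one `-1`, rest `0`. -/
def Hd (d : ℕ) : Set (EuclideanSpace ℝ (Fin d)) :=
  {x | ∃ i j : Fin d, i ≠ j ∧ x i = 1 ∧ x j = -1 ∧ ∀ k, k ≠ i → k ≠ j → x k = 0}
/-- A flow on a graph, represented as an antisymmetric function on ordered pairs of vertices,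
supported on edges, with conservation at every vertex. -/
def IsFlow {V : Type*} [Fintype V] {d : ℕ} (G : SimpleGraph V)
    (f : V → V → EuclideanSpace ℝ (Fin d)) : Prop :=
  (∀ u v, f u v = - f v u) ∧ (∀ u v, ¬ G.Adj u v → f u v = 0) ∧ (∀ v, ∑ u, f v u = 0)

/-- `G` admits a flow with all edge values in the (symmetric) set `X`. -/
def HasFlowIn {V : Type*} [Fintype V] {d : ℕ} (G : SimpleGraph V)
    (X : Set (EuclideanSpace ℝ (Fin d))) : Prop :=
  ∃ f, IsFlow G f ∧ ∀ u v, G.Adj u v → f u v ∈ X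
/-- An oriented `d`-cycle double cover: `d` integer circulations with values in `{-1,0,1}`
(each being an eulerian-oriented even subgraph, i.e. a directed cycle), such that every edge
lies in exactly two of them (`∑ i, (c i u v)^2 = 2`) with opposite orientations
(`∑ i, c i u v = 0`). -/
def IsOrientedCDC {V : Type*} [Fintype V] (G : SimpleGraph V) {d : ℕ}
    (c : Fin d → V → V → ℤ) : Prop :=
  (∀ i u v, c i u v = - c i v u) ∧
  (∀ i u v, ¬ G.Adj u v → c i u v = 0) ∧
  (∀ i u v, c i u v = 1 ∨ c i u v = 0 ∨ c i u v = -1) ∧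
  (∀ i v, ∑ u, c i v u = 0) ∧
  (∀ u v, G.Adj u v → (∑ i, (c i u v)^2 = 2 ∧ ∑ i, c i u v = 0))
/-- `G` admits an `(r, d)`-NZF: a flow into `ℝ^d` with all edge values of norm in `[1, r-1]`. -/
def HasNZF {V : Type*} [Fintype V] (G : SimpleGraph V) (r : ℝ) (d : ℕ) : Prop :=
  ∃ f : V → V → EuclideanSpace ℝ (Fin d), IsFlow G f ∧
    ∀ u v, G.Adj u v → ‖f u v‖ ∈ Set.Icc (1 : ℝ) (r - 1)

/-- The `d`-dimensional flow number: the infimum of `r ≥ 2` such that `G` has an `(r,d)`-NZF. -/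
noncomputable def flowNumber {V : Type*} [Fintype V] (G : SimpleGraph V) (d : ℕ) : ℝ :=
  sInf {r : ℝ | 2 ≤ r ∧ HasNZF G r d}

/-!
Send the `i`-th circuit of the double cover to a point `p i ∈ ℝ^(d-2)`. The flow
`∑ i, c i • p i` takes the value `p i - p j` on an edge traversed forwards by circuit `i` and
backwards by circuit `j`, so it suffices to place `d` points in `ℝ^(d-2)` with all pairwise
distances in `[1, r - 1]`. Take two regular simplices with `⌊d/2⌋` and `⌈d/2⌉` vertices, centred
at the origin in orthogonal subspaces of dimensions `⌊d/2⌋ - 1` and `⌈d/2⌉ - 1`, and scale them so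
that vertices of different simplices are at distance `1`. Vertices of the same simplex are then at
distance `√(2 / (2 - 1/⌊d/2⌋ - 1/⌈d/2⌉))`, which is the bound of the theorem.
-/

open Finset RealInnerProductSpace

theorem exists_regular_simplex (γ : Type*) [Fintype γ] {n : ℕ} (hγ : Fintype.card γ = n + 1) :
    ∃ σ : γ → EuclideanSpace ℝ (Fin n),
      (∀ i, ‖σ i‖ ^ 2 = 1 - (n + 1 : ℝ)⁻¹) ∧ ∀ i j, i ≠ j → ‖σ i - σ j‖ ^ 2 = 2 := by
  classical
  set e : γ → EuclideanSpace ℝ γ := fun i => EuclideanSpace.single i 1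
  set one : EuclideanSpace ℝ γ := ∑ i, e i
  set v : γ → EuclideanSpace ℝ γ := fun i => e i - (n + 1 : ℝ)⁻¹ • one
  have he : ∀ i j, ⟪e i, e j⟫ = if i = j then 1 else 0 :=
    orthonormal_iff_ite.1 EuclideanSpace.orthonormal_single
  have inner_e_one : ∀ i, ⟪e i, one⟫ = 1 := by simp [one, inner_sum, he]
  have inner_one_one : ⟪one, one⟫ = n + 1 := by
    rw [show ⟪one, one⟫ = ∑ i, ⟪e i, one⟫ from sum_inner _ _ _]
    simp [inner_e_one, hγ]
  have hone : one ≠ 0 := by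
    rintro h
    rw [h, inner_zero_left] at inner_one_one
    linarith
  have hv : ∀ i, v i ∈ (ℝ ∙ one)ᗮ := fun i => by
    rw [Submodule.mem_orthogonal_singleton_iff_inner_right]
    simp only [v, inner_sub_right, inner_smul_right, real_inner_comm, inner_e_one, inner_one_one]
    field_simp
    ring
  have : Fact (Module.finrank ℝ (EuclideanSpace ℝ γ) = n + 1) := ⟨by simp [hγ]⟩
  let φ := (OrthonormalBasis.fromOrthogonalSpanSingleton (𝕜 := ℝ) n hone).repr
  refine ⟨fun i => φ ⟨v i, hv i⟩, fun i => ?_, fun i j hij => ?_⟩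
  · rw [LinearIsometryEquiv.norm_map, Submodule.coe_norm, ← real_inner_self_eq_norm_sq]
    simp only [v, inner_sub_left, inner_sub_right, inner_smul_left, inner_smul_right,
      real_inner_comm, inner_e_one, inner_one_one, he, ↓reduceIte]
    field_simp
    ring
  · rw [← map_sub, LinearIsometryEquiv.norm_map, Submodule.coe_norm, AddSubgroupClass.coe_sub,
      ← real_inner_self_eq_norm_sq]
    simp only [v, sub_sub_sub_cancel_right, inner_sub_left, inner_sub_right, he, ↓reduceIte,
      if_neg hij, if_neg hij.symm]
    norm_num

theorem WithLp.prod_norm_sq_toLp_sub_toLp {E F : Type*} [NormedAddCommGroup E]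
    [NormedAddCommGroup F] (x x' : E) (y y' : F) :
    ‖WithLp.toLp 2 (x, y) - WithLp.toLp 2 (x', y')‖ ^ 2 = ‖x - x'‖ ^ 2 + ‖y - y'‖ ^ 2 := by
  rw [← WithLp.toLp_sub, WithLp.prod_norm_sq_eq_of_L2]
  rfl

theorem exists_two_simplices {α β : Type*} [Fintype α] [Fintype β] {m k : ℕ}
    (hα : Fintype.card α = m + 1) (hβ : Fintype.card β = k + 1) :
    ∃ q : α ⊕ β → EuclideanSpace ℝ (Fin (m + k)),
      (∀ i j, ‖q (.inl i) - q (.inr j)‖ ^ 2 =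
        2 - (Fintype.card α : ℝ)⁻¹ - (Fintype.card β : ℝ)⁻¹) ∧
      (∀ i i', i ≠ i' → ‖q (.inl i) - q (.inl i')‖ ^ 2 = 2) ∧
      (∀ j j', j ≠ j' → ‖q (.inr j) - q (.inr j')‖ ^ 2 = 2) := by
  obtain ⟨σ, hσ, hσσ⟩ := exists_regular_simplex α hα
  obtain ⟨τ, hτ, hττ⟩ := exists_regular_simplex β hβ
  let J : WithLp 2 (EuclideanSpace ℝ (Fin m) × EuclideanSpace ℝ (Fin k)) ≃ₗᵢ[ℝ]
      EuclideanSpace ℝ (Fin (m + k)) :=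
    (PiLp.sumPiLpEquivProdLpPiLp 2 fun _ => ℝ).symm.trans
      (LinearIsometryEquiv.piLpCongrLeft 2 ℝ ℝ finSumFinEquiv)
  refine ⟨Sum.elim (fun i => J (WithLp.toLp 2 (σ i, 0))) (fun j => J (WithLp.toLp 2 (0, τ j))),
    fun i j => ?_, fun i i' hi => ?_, fun j j' hj => ?_⟩ <;>
  simp only [Sum.elim_inl, Sum.elim_inr, ← map_sub, LinearIsometryEquiv.norm_map,
    WithLp.prod_norm_sq_toLp_sub_toLp, sub_zero, zero_sub, norm_neg, norm_zero, sub_self]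
  · rw [hσ, hτ, hα, hβ]; push_cast; ring
  · rw [hσσ i i' hi]; ring
  · rw [hττ j j' hj]; ring

theorem exists_two_simplices_norm_sub_mem_Icc {α β : Type*} [Fintype α] [Fintype β] {m k : ℕ}
    (hα : Fintype.card α = m + 1) (hβ : Fintype.card β = k + 1) (hmk : m + k ≠ 0) :
    ∃ p : α ⊕ β → EuclideanSpace ℝ (Fin (m + k)), ∀ x y, x ≠ y →
      ‖p x - p y‖ ∈
        Set.Icc 1 √(2 / (2 - (Fintype.card α : ℝ)⁻¹ - (Fintype.card β : ℝ)⁻¹)) := by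
  obtain ⟨q, hcross, hleft, hright⟩ := exists_two_simplices hα hβ
  set C := 2 - (Fintype.card α : ℝ)⁻¹ - (Fintype.card β : ℝ)⁻¹
  have ha : (1 : ℝ) ≤ Fintype.card α := by rw [hα]; exact_mod_cast Nat.le_add_left 1 m
  have hb : (1 : ℝ) ≤ Fintype.card β := by rw [hβ]; exact_mod_cast Nat.le_add_left 1 k
  have hC : 0 < C := by
    have hab : (3 : ℝ) ≤ Fintype.card α + Fintype.card β := by
      rw [hα, hβ]; exact_mod_cast (by omega : 3 ≤ m + 1 + (k + 1))
    simp only [C]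
    rw [sub_sub, sub_pos, inv_add_inv (by positivity) (by positivity), div_lt_iff₀ (by positivity)]
    nlinarith
  have hC2 : C ≤ 2 := by
    have : 0 < (Fintype.card α : ℝ)⁻¹ := by positivity
    have : 0 < (Fintype.card β : ℝ)⁻¹ := by positivity
    linarith
  have hq : ∀ x y, x ≠ y → ‖q x - q y‖ ^ 2 = C ∨ ‖q x - q y‖ ^ 2 = 2 := by
    rintro (i | j) (i' | j') hxy
    · exact .inr (hleft i i' fun h => hxy (h ▸ rfl))
    · exact .inl (hcross i j')
    · exact .inl (norm_sub_rev (q _) (q _) ▸ hcross i' j)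
    · exact .inr (hright j j' fun h => hxy (h ▸ rfl))
  refine ⟨fun x => (√C)⁻¹ • q x, fun x y hxy => ?_⟩
  have hnorm : ‖(√C)⁻¹ • q x - (√C)⁻¹ • q y‖ = √(‖q x - q y‖ ^ 2 / C) := by
    rw [← smul_sub, norm_smul, norm_inv, Real.norm_of_nonneg (Real.sqrt_nonneg _),
      Real.sqrt_div' _ hC.le, Real.sqrt_sq (norm_nonneg _), inv_mul_eq_div]
  have hone : 1 ≤ √(2 / C) := Real.one_le_sqrt.2 ((one_le_div hC).2 hC2)
  rw [hnorm]
  rcases hq x y hxy with h | h <;> rw [h]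
  · rw [div_self hC.ne', Real.sqrt_one]; exact ⟨le_rfl, hone⟩
  · exact ⟨hone, le_rfl⟩

theorem exists_eq_one_eq_neg_one_of_sum_sq_eq_two {ι : Type*} [Fintype ι] {x : ι → ℤ}
    (hx : ∀ i, x i = 1 ∨ x i = 0 ∨ x i = -1) (hsq : ∑ i, x i ^ 2 = 2) (hsum : ∑ i, x i = 0) :
    ∃ i j, i ≠ j ∧ x i = 1 ∧ x j = -1 ∧ ∀ k, k ≠ i → k ≠ j → x k = 0 := by
  classical
  have hcard : #{i | x i ≠ 0} = 2 := by
    have hsq' : ∀ i, x i ^ 2 = if x i ≠ 0 then 1 else 0 := fun i => by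
      rcases hx i with h | h | h <;> simp [h]
    rw [sum_congr rfl fun i _ => hsq' i, sum_boole] at hsq
    exact_mod_cast hsq
  obtain ⟨i, j, hij, hS⟩ := card_eq_two.1 hcard
  have hsupp : ∀ k, x k ≠ 0 ↔ k = i ∨ k = j := fun k => by
    simpa using congrArg (k ∈ ·) hS
  have hrest : ∀ k, k ≠ i → k ≠ j → x k = 0 := fun k hki hkj => by
    by_contra h
    exact ((hsupp k).1 h).elim hki hkj
  have hxi := (hsupp i).2 (.inl rfl)
  have hxj := (hsupp j).2 (.inr rfl)
  have hpair : x i + x j = 0 := by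
    rwa [Fintype.sum_eq_add i j hij fun k hk => hrest k hk.1 hk.2] at hsum
  rcases hx i with h | h | h
  · exact ⟨i, j, hij, h, by omega, hrest⟩
  · exact absurd h hxi
  · exact ⟨j, i, hij.symm, by omega, h, fun k hkj hki => hrest k hki hkj⟩

namespace IsOrientedCDC

variable {V : Type*} [Fintype V] {G : SimpleGraph V} {d n : ℕ} {c : Fin d → V → V → ℤ}

theorem isFlow_sum_smul (hc : IsOrientedCDC G c) (p : Fin d → EuclideanSpace ℝ (Fin n)) :
    IsFlow G fun u v => ∑ i, (c i u v : ℝ) • p i := by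
  obtain ⟨hanti, hsupp, -, hcons, -⟩ := hc
  refine ⟨fun u v => ?_, fun u v huv => ?_, fun v => ?_⟩
  · simp [hanti _ u v, ← sum_neg_distrib]
  · simp [hsupp _ u v huv]
  · rw [sum_comm]
    refine sum_eq_zero fun i _ => ?_
    rw [← sum_smul, ← Int.cast_sum, hcons i v, Int.cast_zero, zero_smul]

theorem exists_sum_smul_eq_sub (hc : IsOrientedCDC G c) {u v : V} (huv : G.Adj u v)
    (p : Fin d → EuclideanSpace ℝ (Fin n)) :
    ∃ i j, i ≠ j ∧ ∑ k, (c k u v : ℝ) • p k = p i - p j := by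
  obtain ⟨-, -, hval, -, hcover⟩ := hc
  obtain ⟨i, j, hij, hi, hj, hrest⟩ := exists_eq_one_eq_neg_one_of_sum_sq_eq_two
    (fun k => hval k u v) (hcover u v huv).1 (hcover u v huv).2
  refine ⟨i, j, hij, ?_⟩
  rw [Fintype.sum_eq_add i j hij fun k hk => by simp [hrest k hk.1 hk.2], hi, hj]
  simp [sub_eq_add_neg]

theorem hasNZF (hc : IsOrientedCDC G c) {r : ℝ} (p : Fin d → EuclideanSpace ℝ (Fin n))
    (hp : ∀ i j, i ≠ j → ‖p i - p j‖ ∈ Set.Icc 1 (r - 1)) : HasNZF G r n := by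
  refine ⟨_, hc.isFlow_sum_smul p, fun u v huv => ?_⟩
  obtain ⟨i, j, hij, heq⟩ := hc.exists_sum_smul_eq_sub huv p
  exact heq ▸ hp i j hij

theorem flowNumber_le (hc : IsOrientedCDC G c) (hd : 2 ≤ d) {r : ℝ}
    (p : Fin d → EuclideanSpace ℝ (Fin n))
    (hp : ∀ i j, i ≠ j → ‖p i - p j‖ ∈ Set.Icc 1 (r - 1)) : flowNumber G n ≤ r := by
  have h01 := hp ⟨0, by omega⟩ ⟨1, by omega⟩ (by simp [Fin.ext_iff])
  exact csInf_le ⟨2, fun _ hs => hs.1⟩ ⟨by linarith [h01.1, h01.2], hc.hasNZF p hp⟩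

end IsOrientedCDC

theorem two_div_two_sub_inv_sub_inv_eq (d : ℕ) (hd : 3 ≤ d) :
    2 / (2 - ((d / 2 : ℕ) : ℝ)⁻¹ - ((d - d / 2 : ℕ) : ℝ)⁻¹) =
      if Even d then (d : ℝ) / ((d : ℝ) - 2)
      else ((d : ℝ) ^ 2 - 1) / ((d : ℝ) ^ 2 - 2 * d - 1) := by
  rcases Nat.even_or_odd' d with ⟨m, rfl | rfl⟩
  · have hm : (2 : ℝ) ≤ m := by exact_mod_cast (by omega : 2 ≤ m)
    rw [if_pos (even_two_mul m), show 2 * m / 2 = m by omega, show 2 * m - m = m by omega]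
    push_cast
    have hinv : (m : ℝ)⁻¹ ≤ 2⁻¹ := inv_anti₀ two_pos hm
    rw [div_eq_div_iff (by linarith) (by linarith)]
    field_simp
    ring
  · have hm : (1 : ℝ) ≤ m := by exact_mod_cast (by omega : 1 ≤ m)
    rw [if_neg (Nat.not_even_iff_odd.2 (odd_two_mul_add_one m)), show (2 * m + 1) / 2 = m by omega,
      show 2 * m + 1 - m = m + 1 by omega]
    push_cast
    have hinv : (m : ℝ)⁻¹ ≤ 1 := inv_le_one_of_one_le₀ hm
    have hinv' : ((m : ℝ) + 1)⁻¹ ≤ 2⁻¹ := inv_anti₀ two_pos (by linarith)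
    rw [div_eq_div_iff (by linarith) (by nlinarith)]
    field_simp
    ring

/-- If `G` admits an oriented `d`-cycle double cover (`d ≥ 3`), then
`φ_{d-2}(G) ≤ 1 + √(d/(d-2))` for even `d`, and
`φ_{d-2}(G) ≤ 1 + √((d²-1)/(d²-2d-1))` for odd `d`. -/
theorem stmt15 {V : Type*} [Fintype V] (G : SimpleGraph V) (d : ℕ) (hd : 3 ≤ d)
    (h : ∃ c : Fin d → V → V → ℤ, IsOrientedCDC G c) :
    flowNumber G (d - 2) ≤
      if Even d then 1 + Real.sqrt ((d : ℝ) / ((d : ℝ) - 2))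
      else 1 + Real.sqrt (((d : ℝ) ^ 2 - 1) / ((d : ℝ) ^ 2 - 2 * d - 1)) := by
  obtain ⟨c, hc⟩ := h
  obtain ⟨p, hp⟩ := exists_two_simplices_norm_sub_mem_Icc (α := Fin (d / 2))
    (β := Fin (d - d / 2)) (m := d / 2 - 1) (k := d - d / 2 - 1)
    (by rw [Fintype.card_fin]; omega) (by rw [Fintype.card_fin]; omega) (by omega)
  simp only [Fintype.card_fin] at hp
  let e : Fin d ≃ Fin (d / 2) ⊕ Fin (d - d / 2) := Fintype.equivOfCardEq <| by
    simp only [Fintype.card_sum, Fintype.card_fin]; omega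
  rw [show d - 2 = d / 2 - 1 + (d - d / 2 - 1) by omega]
  calc _ ≤ 1 + √(2 / (2 - ((d / 2 : ℕ) : ℝ)⁻¹ - ((d - d / 2 : ℕ) : ℝ)⁻¹)) :=
        hc.flowNumber_le (by omega) (p ∘ e) fun i j hij => by
          rw [add_sub_cancel_left]; exact hp (e i) (e j) (e.injective.ne hij)
    _ = _ := by rw [two_div_two_sub_inv_sub_inv_eq d hd]; split_ifs <;> rfl
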